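/- arXiv:2309.03505 — 6 statements merged into one kernel-verified Lean document; each statement's English description precedes it below -/
import Mathlib

section
/- Let (M,ρ) be a metric space, let f, g : M → ℝ ∪ {+∞}, and let λ ∈ ℝ be such that the set M₁ := {x ∈ dom f : f(x)-g(x) ≤ λ} intersects dom f ∩ dom g nontrivially. Let f₁ := f restricted to M₁ (viewed as a function on the metric subspace M₁). If x ∈ M₁ satisfies |∇f|(x) > |∇g|(x), then |∇f₁|(x) = |∇f|(x). -/
open Filter Topology ENNReal

/-- The positive part `[x]⁺` of an extended real, as an element of `ℝ≥0∞`. -/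
noncomputable def erealPos (x : EReal) : ℝ≥0∞ := if x = ⊤ then ⊤ else ENNReal.ofReal x.toReal

/-- The global slope `|∇̃ f|(x) = sup_{y ≠ x} [f x - f y]⁺ / ρ(x,y)` of `f : M → ℝ ∪ {+∞}`. -/
noncomputable def globalSlope {M : Type*} [MetricSpace M] (f : M → EReal) (x : M) : ℝ≥0∞ :=
  ⨆ y ∈ {y : M | y ≠ x}, erealPos (f x - f y) / edist x y

/-- The local slope `|∇ f|(x) = limsup_{y → x, y ≠ x} [f x - f y]⁺ / ρ(x,y)`. -/
noncomputable def localSlope {M : Type*} [MetricSpace M] (f : M → EReal) (x : M) : ℝ≥0∞ :=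
  Filter.limsup (fun y => erealPos (f x - f y) / edist x y) (𝓝[≠] x)

/-- `ε`-global-critical points: `x ∈ dom f` with `f y ≥ f x - ε·ρ(y,x)` for all `y`. -/
def epsCrit {M : Type*} [MetricSpace M] (ε : ℝ) (f : M → EReal) : Set M :=
  {x | f x ≠ ⊤ ∧ ∀ y, f x - ↑(ε * dist y x) ≤ f y}

/-!
Split the punctured neighbourhood filter of `x` into its traces on `M₁` and on the
complement of `M₁`. For `y ∉ M₁` we have `f x - g x ≤ λ < f y - g y`, hence
`f x - f y ≤ g x - g y`, so along the complement the difference quotients of `f` are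
dominated by those of `g` and their limsup is at most `|∇g|(x) < |∇f|(x)`. Since `|∇f|(x)`
is the larger of the two partial limsups, it is attained along `M₁`, and that partial
limsup is exactly `|∇f₁|(x)`.
-/
theorem EReal.sub_le_sub_of_sub_lt_sub {a b c d : EReal} (h : a - b < c - d) :
    a - c ≤ b - d := by
  induction a using EReal.rec <;> induction b using EReal.rec <;> induction c using EReal.rec <;>
    induction d using EReal.rec <;> try simp_all
  norm_cast at h ⊢
  linarith

lemma erealPos_mono : Monotone erealPos := by
  intro a b hab
  unfold erealPos
  by_cases hb : b = ⊤
  · simp [hb]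
  have ha : a ≠ ⊤ := ne_top_of_le_ne_top hb hab
  simp only [ha, hb, if_false]
  by_cases ha' : a = ⊥
  · simp [ha']
  exact ENNReal.ofReal_le_ofReal (EReal.toReal_le_toReal hab ha' hb)

section Slope

variable {M : Type*} [MetricSpace M]

noncomputable def slopeQuotient (f : M → EReal) (x y : M) : ℝ≥0∞ :=
  erealPos (f x - f y) / edist x y

lemma localSlope_eq_limsup (f : M → EReal) (x : M) :
    localSlope f x = limsup (slopeQuotient f x) (𝓝[≠] x) :=
  rfl

lemma localSlope_subtype (f : M → EReal) (S : Set M) (x : S) :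
    localSlope (fun y : S => f y) x =
      limsup (slopeQuotient f x) (𝓝[S \ {(x : M)}] (x : M)) := by
  have hmap : map ((↑) : S → M) (𝓝[≠] x) = 𝓝[S \ {(x : M)}] (x : M) := by
    rw [IsEmbedding.subtypeVal.map_nhdsWithin_eq, Set.image_val_compl, Set.image_singleton]
  rw [← hmap, ← limsup_comp]
  rfl

lemma localSlope_eq_sup (f : M → EReal) (S : Set M) (x : M) :
    localSlope f x = limsup (slopeQuotient f x) (𝓝[S \ {x}] x) ⊔
      limsup (slopeQuotient f x) (𝓝[Sᶜ \ {x}] x) := by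
  rw [localSlope_eq_limsup, ← limsup_sup_filter, ← nhdsWithin_union,
    ← Set.union_sdiff_distrib, Set.union_compl_self, ← Set.compl_eq_univ_sdiff]

lemma slopeQuotient_le_of_sub_le_of_lt {f g : M → EReal} {x y : M} {r : EReal}
    (hx : f x - g x ≤ r) (hy : f y ≠ ⊤ → r < f y - g y) :
    slopeQuotient f x y ≤ slopeQuotient g x y := by
  refine ENNReal.div_le_div_right (erealPos_mono ?_) _
  by_cases hfy : f y = ⊤
  · simp [hfy]
  exact EReal.sub_le_sub_of_sub_lt_sub (hx.trans_lt (hy hfy))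

lemma limsup_slopeQuotient_le_localSlope {f g : M → EReal} {x : M} {T : Set M}
    (h : ∀ y ∈ T, slopeQuotient f x y ≤ slopeQuotient g x y) :
    limsup (slopeQuotient f x) (𝓝[T \ {x}] x) ≤ localSlope g x :=
  calc limsup (slopeQuotient f x) (𝓝[T \ {x}] x)
      ≤ limsup (slopeQuotient g x) (𝓝[T \ {x}] x) :=
        limsup_le_limsup (eventually_nhdsWithin_of_forall fun y hy => h y hy.1)
    _ ≤ localSlope g x := limsup_le_limsup_of_le (nhdsWithin_mono _ (Set.sdiff_subset_compl _ _))

end Slope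

theorem localSlope_restrict_sublevel_general {M : Type*} [MetricSpace M] (f g : M → EReal) (lam : ℝ)
    (S : Set M) (hS : S = {x | f x ≠ ⊤ ∧ f x - g x ≤ (lam : EReal)})
    (x : S) (hx : localSlope g (x : M) < localSlope f (x : M)) :
    localSlope (fun y : S => f y) x = localSlope f (x : M) := by
  have hxS : f x - g x ≤ (lam : EReal) :=
    (hS ▸ x.2 : (x : M) ∈ {x | f x ≠ ⊤ ∧ f x - g x ≤ (lam : EReal)}).2
  have hoff : limsup (slopeQuotient f x) (𝓝[Sᶜ \ {(x : M)}] x) ≤ localSlope g x :=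
    limsup_slopeQuotient_le_localSlope fun y hy =>
      slopeQuotient_le_of_sub_le_of_lt hxS fun hfy => not_le.mp fun h => hy (hS ▸ ⟨hfy, h⟩)
  have hsplit := localSlope_eq_sup f S x
  have hoff_lt : _ < _ ⊔ _ := hsplit ▸ hoff.trans_lt hx
  rw [localSlope_subtype, hsplit, eq_comm, sup_eq_left]
  exact le_of_not_ge (right_lt_sup.mp hoff_lt)

/-- on the sublevel set `M₁ = {x ∈ dom f : f x - g x ≤ λ}`, the local slope of
the restriction `f₁ = f|_{M₁}` coincides with that of `f` at every `x ∈ M₁` where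
`|∇f|(x) > |∇g|(x)`. -/
theorem localSlope_restrict_sublevel {M : Type*} [MetricSpace M] (f g : M → EReal) (lam : ℝ)
    (S : Set M) (hS : S = {x | f x ≠ ⊤ ∧ f x - g x ≤ (lam : EReal)})
    (hne : ∃ x ∈ S, g x ≠ ⊤)
    (x : S) (hx : localSlope g (x : M) < localSlope f (x : M)) :
    localSlope (fun y : S => f y) x = localSlope f (x : M) :=
  localSlope_restrict_sublevel_general f g lam S hS x hx
end

section
/- Let (M,ρ) be a metric space, let f, g : M → ℝ ∪ {+∞}, and let λ ∈ ℝ be such that the set M₁ := {x ∈ dom f : f(x)-g(x) ≤ λ} intersects dom f ∩ dom g nontrivially. Let f₁ := f restricted to M₁ (viewed as a function on the metric subspace M₁). If x ∈ M₁ satisfies |∇̃f|(x) > |∇̃g|(x), then |∇̃f₁|(x) = |∇̃f|(x). -/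
open Filter Topology ENNReal

lemma lt_of_lt_erealPos {a : EReal} {b : ℝ≥0∞} (h : b < erealPos a) (hb : b ≠ ⊤) :
    (b.toReal : EReal) < a := by
  unfold erealPos at h
  split_ifs at h with ht
  · exact ht ▸ EReal.coe_lt_top _
  · have hpos : 0 < a.toReal := by
      by_contra hle
      push_neg at hle
      simp [ENNReal.ofReal_eq_zero.mpr hle] at h
    have hbot : a ≠ ⊥ := by
      intro hb'; simp [hb'] at hpos
    have := (ENNReal.toReal_lt_toReal hb ENNReal.ofReal_ne_top).mpr h
    rw [ENNReal.toReal_ofReal hpos.le] at this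
    calc (b.toReal : EReal) < (a.toReal : EReal) := EReal.coe_lt_coe_iff.mpr this
      _ = a := EReal.coe_toReal ht hbot

lemma le_of_erealPos_le {a : EReal} {b : ℝ≥0∞} (h : erealPos a ≤ b) (hb : b ≠ ⊤) :
    a ≤ (b.toReal : EReal) := by
  unfold erealPos at h
  split_ifs at h with ht
  · exact absurd (top_le_iff.mp h) hb
  · rcases eq_or_ne a ⊥ with rfl | hbot
    · exact bot_le
    · rw [← EReal.coe_toReal ht hbot]
      rcases le_or_gt a.toReal 0 with h0 | h0
      · exact EReal.coe_le_coe_iff.mpr (h0.trans ENNReal.toReal_nonneg)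
      · refine EReal.coe_le_coe_iff.mpr ?_
        have := ENNReal.toReal_mono hb h
        rwa [ENNReal.toReal_ofReal h0.le] at this

lemma key_mem {fx fy gx gy : EReal} {lam r : ℝ} (hfx : fx ≠ ⊤) (hxl : fx - gx ≤ (lam : EReal))
    (h1 : (r : EReal) < fx - fy) (h2 : gx - gy ≤ (r : EReal)) :
    fy ≠ ⊤ ∧ fy - gy ≤ (lam : EReal) := by
  induction fx using EReal.rec with
  | bot => rw [EReal.bot_sub] at h1; exact absurd h1 (by simp)
  | top => exact absurd rfl hfx
  | coe px =>
    induction fy using EReal.rec with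
    | top => rw [EReal.sub_top] at h1; exact absurd h1 (by simp)
    | bot =>
      refine ⟨by simp, ?_⟩
      rw [EReal.bot_sub]; exact bot_le
    | coe py =>
      refine ⟨by simp, ?_⟩
      induction gy using EReal.rec with
      | top => rw [EReal.sub_top]; exact bot_le
      | bot =>
        exfalso
        induction gx using EReal.rec with
        | top => rw [EReal.top_sub_bot] at h2; simp at h2
        | coe pgx => rw [EReal.coe_sub_bot] at h2; simp at h2
        | bot => rw [EReal.sub_bot (by simp)] at hxl; simp at hxl
      | coe pgy =>
        induction gx using EReal.rec with
        | top => exfalso; rw [EReal.top_sub_coe] at h2; simp at h2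
        | bot => exfalso; rw [EReal.sub_bot (by simp)] at hxl; simp at hxl
        | coe pgx =>
          rw [← EReal.coe_sub] at hxl h1 h2 ⊢
          rw [EReal.coe_le_coe_iff] at hxl h2 ⊢
          rw [EReal.coe_lt_coe_iff] at h1
          linarith

/-- on the sublevel set `M₁ = {x ∈ dom f : f x - g x ≤ λ}`, the global slope of
the restriction `f₁ = f|_{M₁}` coincides with that of `f` at every `x ∈ M₁` where
`|∇̃f|(x) > |∇̃g|(x)`. -/
theorem globalSlope_restrict_sublevel {M : Type*} [MetricSpace M] (f g : M → EReal) (lam : ℝ)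
    (S : Set M) (hS : S = {x | f x ≠ ⊤ ∧ f x - g x ≤ (lam : EReal)})
    (hne : ∃ x ∈ S, g x ≠ ⊤)
    (x : S) (hx : globalSlope g (x : M) < globalSlope f (x : M)) :
    globalSlope (fun y : S => f y) x = globalSlope f (x : M) := by
  obtain ⟨hfx, hxl⟩ : f (x : M) ≠ ⊤ ∧ f (x : M) - g (x : M) ≤ (lam : EReal) := by
    exact (Set.ext_iff.mp hS _).mp x.2
  refine le_antisymm ?_ ?_
  · refine iSup₂_le fun y hy => ?_
    have hne' : (y : M) ≠ (x : M) := fun h => hy (Subtype.ext h)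
    have hed : edist x y = edist (x : M) (y : M) := rfl
    rw [hed]
    exact le_iSup₂ (f := fun z (_ : z ∈ {y : M | y ≠ (x:M)}) => erealPos (f x - f z) / edist (x:M) z)
      (y : M) hne'
  · refine le_of_forall_lt fun c hc => ?_
    set b := max c (globalSlope g (x : M)) with hb_def
    have hb : b < globalSlope f (x : M) := max_lt hc hx
    have hbt : b ≠ ⊤ := hb.ne_top
    rw [globalSlope] at hb
    rw [lt_iSup_iff] at hb
    obtain ⟨y, hy⟩ := hb
    rw [lt_iSup_iff] at hy
    obtain ⟨hyx, hy⟩ := hy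
    have hd0 : edist (x : M) y ≠ 0 := by
      exact (edist_pos.mpr (Ne.symm hyx)).ne'
    have hdt : edist (x : M) y ≠ ⊤ := edist_ne_top _ _
    have h1 : b * edist (x : M) y < erealPos (f x - f y) :=
      (ENNReal.lt_div_iff_mul_lt (Or.inl hd0) (Or.inl hdt)).mp hy
    have hg : erealPos (g x - g y) / edist (x : M) y ≤ b := by
      refine le_trans ?_ (le_max_right _ _)
      exact le_iSup₂ (f := fun z (_ : z ∈ {y : M | y ≠ (x:M)}) => erealPos (g x - g z) / edist (x:M) z)
        y hyx
    have h2 : erealPos (g x - g y) ≤ b * edist (x : M) y :=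
      (ENNReal.div_le_iff_le_mul (Or.inl hd0) (Or.inl hdt)).mp hg
    have hbd : b * edist (x : M) y ≠ ⊤ := ENNReal.mul_ne_top hbt hdt
    have h1' := lt_of_lt_erealPos h1 hbd
    have h2' := le_of_erealPos_le h2 hbd
    obtain ⟨hfy, hyl⟩ := key_mem hfx hxl h1' h2'
    have hyS : y ∈ S := by rw [hS]; exact ⟨hfy, hyl⟩
    have hyx' : (⟨y, hyS⟩ : S) ≠ x := fun h => hyx (congrArg Subtype.val h)
    calc c ≤ b := le_max_left _ _
      _ < erealPos (f x - f y) / edist (x : M) y := hy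
      _ ≤ globalSlope (fun y : S => f y) x := by
          refine le_trans (le_of_eq rfl) ?_
          exact le_iSup₂ (f := fun (z : S) (_ : z ∈ {y : S | y ≠ x}) =>
            erealPos (f (x:M) - f (z:M)) / edist x z) (⟨y, hyS⟩ : S) hyx'
end

section
/- Let (M,ρ) be a complete metric space and let f : M → ℝ ∪ {+∞} be proper, lower semicontinuous and bounded below. Then for each x ∈ dom f there is a sequence {xₙ} with each xₙ ∈ dom f and |∇̃f|(xₙ) < ∞, such that xₙ → x and f(xₙ) → f(x). -/
/-!
Ekeland's variational principle with parameter `ε`, applied to the truncation `min f (f x)` and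
started at `x`, yields a point `z` with `f z ≤ f x`, `ε * ρ(z, x) ≤ f x - inf f` and
`f ≥ f z - ε * ρ(·, z)`; the last inequality bounds the global slope at `z` by `ε`. Taking
`ε = n + 1` gives points converging to `x`, and their values converge to `f x`: from above since
`f z ≤ f x`, from below by lower semicontinuity.
-/

open Filter Topology ENNReal

theorem lowerSemicontinuous_of_coe_ereal {α : Type*} [TopologicalSpace α] {g : α → ℝ}
    (hg : LowerSemicontinuous fun y => (g y : EReal)) : LowerSemicontinuous g := by
  refine lowerSemicontinuous_iff_isClosed_preimage.2 fun t => ?_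
  convert hg.isClosed_preimage (t : EReal) using 1
  ext y
  exact EReal.coe_le_coe_iff.symm

theorem LowerSemicontinuousAt.tendsto_of_le {α γ ι : Type*} [TopologicalSpace α] [LinearOrder γ]
    [TopologicalSpace γ] [OrderTopology γ] {f : α → γ} {x : α} (hf : LowerSemicontinuousAt f x)
    {l : Filter ι} {u : ι → α} (hu : Tendsto u l (𝓝 x)) (hle : ∀ᶠ n in l, f (u n) ≤ f x) :
    Tendsto (fun n => f (u n)) l (𝓝 (f x)) :=
  tendsto_order.2 ⟨fun _ ha => hu.eventually (hf _ ha),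
    fun _ ha => hle.mono fun _ hn => hn.trans_lt ha⟩

section Ekeland

variable {X : Type*} [MetricSpace X] {g : X → ℝ} {ε C : ℝ}

def ekelandSet (g : X → ℝ) (ε : ℝ) (x : X) : Set X := {y | g y + ε * dist y x ≤ g x}

theorem mem_ekelandSet {x y : X} : y ∈ ekelandSet g ε x ↔ g y + ε * dist y x ≤ g x := Iff.rfl

theorem self_mem_ekelandSet (x : X) : x ∈ ekelandSet g ε x := by
  simp [mem_ekelandSet]

theorem ekelandSet_subset (hε : 0 ≤ ε) {x y : X} (hy : y ∈ ekelandSet g ε x) :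
    ekelandSet g ε y ⊆ ekelandSet g ε x := fun z hz => by
  rw [mem_ekelandSet] at *
  linarith [mul_le_mul_of_nonneg_left (dist_triangle z y x) hε]

theorem LowerSemicontinuous.isClosed_ekelandSet (hg : LowerSemicontinuous g) (x : X) :
    IsClosed (ekelandSet g ε x) :=
  (hg.add (continuous_const.mul (continuous_id.dist continuous_const)).lowerSemicontinuous)
    |>.isClosed_preimage (g x)

theorem exists_mem_ekelandSet_forall_le_add (hC : ∀ y, C ≤ g y) (x : X) {δ : ℝ} (hδ : 0 < δ) :
    ∃ y ∈ ekelandSet g ε x, ∀ y' ∈ ekelandSet g ε x, g y ≤ g y' + δ := by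
  have hne : (g '' ekelandSet g ε x).Nonempty := ⟨g x, x, self_mem_ekelandSet x, rfl⟩
  have hbdd : BddBelow (g '' ekelandSet g ε x) := ⟨C, by rintro _ ⟨y, -, rfl⟩; exact hC y⟩
  obtain ⟨_, ⟨y, hy, rfl⟩, hlt⟩ := exists_lt_of_csInf_lt hne (lt_add_of_pos_right _ hδ)
  exact ⟨y, hy, fun y' hy' => by linarith [csInf_le hbdd ⟨y', hy', rfl⟩]⟩

theorem mem_ekelandSet_of_le (hε : 0 ≤ ε) {s : ℕ → X}
    (hs : ∀ n, s (n + 1) ∈ ekelandSet g ε (s n)) {m n : ℕ} (hmn : m ≤ n) :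
    s n ∈ ekelandSet g ε (s m) := by
  induction n, hmn using Nat.le_induction with
  | base => exact self_mem_ekelandSet _
  | succ n _ ih => exact ekelandSet_subset hε ih (hs n)

theorem cauchySeq_of_succ_mem_ekelandSet (hε : 0 < ε) (hC : ∀ y, C ≤ g y) {s : ℕ → X}
    (hs : ∀ n, s (n + 1) ∈ ekelandSet g ε (s n)) : CauchySeq s := by
  have hanti : Antitone (g ∘ s) := antitone_nat_of_succ_le fun n => by
    have := mem_ekelandSet.1 (hs n)
    have : 0 ≤ ε * dist (s (n + 1)) (s n) := by positivity
    simp only [Function.comp_apply]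
    linarith
  have hcauchy : CauchySeq (g ∘ s) :=
    (tendsto_atTop_ciInf hanti ⟨C, by rintro _ ⟨n, rfl⟩; exact hC _⟩).cauchySeq
  refine Metric.cauchySeq_iff'.2 fun δ hδ => ?_
  obtain ⟨N, hN⟩ := Metric.cauchySeq_iff'.1 hcauchy (ε * δ) (mul_pos hε hδ)
  refine ⟨N, fun n hn => lt_of_mul_lt_mul_left ?_ hε.le⟩
  have hdrop := mem_ekelandSet.1 (mem_ekelandSet_of_le hε.le hs hn)
  have hclose := hN n hn
  rw [Real.dist_eq, abs_lt] at hclose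
  simp only [Function.comp_apply] at hclose
  linarith

theorem LowerSemicontinuous.exists_ekeland_point [CompleteSpace X] (hg : LowerSemicontinuous g)
    (hC : ∀ y, C ≤ g y) (hε : 0 < ε) (x₀ : X) :
    ∃ z, g z + ε * dist z x₀ ≤ g x₀ ∧ ∀ y, g z ≤ g y + ε * dist y z := by
  choose F hF_mem hF_le using fun (n : ℕ) x =>
    exists_mem_ekelandSet_forall_le_add (ε := ε) hC x (Nat.one_div_pos_of_nat (n := n))
  let s : ℕ → X := fun n => Nat.rec x₀ F n
  have hs : ∀ n, s (n + 1) ∈ ekelandSet g ε (s n) := fun n => hF_mem n (s n)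
  obtain ⟨z, hz⟩ := cauchySeq_tendsto_of_complete (cauchySeq_of_succ_mem_ekelandSet hε hC hs)
  have hz_mem : ∀ n, z ∈ ekelandSet g ε (s n) := fun n =>
    (hg.isClosed_ekelandSet _).mem_of_tendsto hz
      (eventually_atTop.2 ⟨n, fun _ hm => mem_ekelandSet_of_le hε.le hs hm⟩)
  refine ⟨z, hz_mem 0, fun y => ?_⟩
  -- Every step nearly minimises `g` over the current Ekeland set, and a point strictly below the
  -- limit `z` would lie in all of them.
  by_contra! hy
  have hle : ∀ n : ℕ, g z ≤ g y + 1 / ((n : ℝ) + 1) := fun n => by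
    have hy_mem := ekelandSet_subset hε.le (hz_mem n) (mem_ekelandSet.2 hy.le)
    have := mem_ekelandSet.1 (hz_mem (n + 1))
    have : 0 ≤ ε * dist z (s (n + 1)) := by positivity
    linarith [hF_le n (s n) y hy_mem]
  have hzy : g z ≤ g y := ge_of_tendsto'
    (by simpa using tendsto_one_div_add_atTop_nhds_zero_nat.const_add (g y)) hle
  have : 0 ≤ ε * dist y z := by positivity
  linarith

end Ekeland

section EpsCrit

variable {M : Type*} [MetricSpace M] {f : M → EReal}

theorem erealPos_le_ofReal {a : EReal} {r : ℝ} (h : a ≤ r) : erealPos a ≤ ENNReal.ofReal r := by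
  induction a using EReal.rec with
  | bot => simp [erealPos]
  | coe a => simpa [erealPos] using ENNReal.ofReal_le_ofReal (EReal.coe_le_coe_iff.1 h)
  | top => exact absurd (top_le_iff.1 h) (EReal.coe_ne_top r)

theorem globalSlope_le_of_mem_epsCrit {ε : ℝ} {x : M} (hx : x ∈ epsCrit ε f) :
    globalSlope f x ≤ ENNReal.ofReal ε := by
  refine iSup₂_le fun y _ => ENNReal.div_le_of_le_mul ?_
  have hdrop : f x - f y ≤ ↑(ε * dist y x) := by
    refine EReal.sub_le_of_le_add' ?_
    rw [← EReal.sub_le_iff_le_add (Or.inl (EReal.coe_ne_bot _)) (Or.inl (EReal.coe_ne_top _))]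
    exact hx.2 y
  rw [edist_dist, ← ENNReal.ofReal_mul' dist_nonneg, dist_comm]
  exact erealPos_le_ofReal hdrop

theorem LowerSemicontinuous.exists_mem_epsCrit_dist_le [CompleteSpace M]
    (hf : LowerSemicontinuous f) {C : ℝ} (hC : ∀ y, (C : EReal) ≤ f y) {x : M} (hx : f x ≠ ⊤)
    {ε : ℝ} (hε : 0 < ε) :
    ∃ z ∈ epsCrit ε f, f z ≤ f x ∧ ε * dist z x ≤ (f x).toReal - C := by
  set g : M → ℝ := fun y => (min (f y) (f x)).toReal with hg_def
  have hg_coe : ∀ y, (g y : EReal) = min (f y) (f x) := fun y =>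
    EReal.coe_toReal (ne_top_of_le_ne_top hx (min_le_right _ _))
      (ne_bot_of_le_ne_bot (EReal.coe_ne_bot C) (le_min (hC y) (hC x)))
  have hgC : ∀ y, C ≤ g y := fun y => by
    rw [← EReal.coe_le_coe_iff, hg_coe]
    exact le_min (hC y) (hC x)
  have hg : LowerSemicontinuous g := lowerSemicontinuous_of_coe_ereal <| by
    simpa only [hg_coe] using hf.inf lowerSemicontinuous_const
  obtain ⟨z, hz_drop, hz_crit⟩ := hg.exists_ekeland_point hgC hε x
  have hgx : g x = (f x).toReal := by simp [hg_def]
  have hfz : f z ≤ f x := by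
    by_contra! hlt
    have hgz : g z = g x := by simp [hg_def, min_eq_right hlt.le]
    have hzx : dist z x ≤ 0 := nonpos_of_mul_nonpos_right (by linarith) hε
    exact hlt.ne (by rw [dist_le_zero.1 hzx])
  have hfz_eq : f z = g z := by rw [hg_coe, min_eq_left hfz]
  refine ⟨z, ⟨ne_top_of_le_ne_top hx hfz, fun y => EReal.sub_le_of_le_add ?_⟩, hfz, ?_⟩
  · calc f z = g z := hfz_eq
      _ ≤ ((g y + ε * dist y z : ℝ) : EReal) := EReal.coe_le_coe_iff.2 (hz_crit y)
      _ ≤ f y + ↑(ε * dist y z) := by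
        rw [EReal.coe_add, hg_coe]
        exact add_le_add_left (min_le_left _ _) _
  · linarith [hgC z]

end EpsCrit

theorem graphical_density_general {M : Type*} [MetricSpace M] [CompleteSpace M] (f : M → EReal)
    (hlsc : LowerSemicontinuous f)
    (hbdd : ∃ C : ℝ, ∀ x, (C : EReal) ≤ f x) :
    ∀ x, f x ≠ ⊤ → ∃ u : ℕ → M,
      (∀ n, f (u n) ≠ ⊤ ∧ globalSlope f (u n) < ⊤) ∧
      Tendsto u atTop (𝓝 x) ∧ Tendsto (fun n => f (u n)) atTop (𝓝 (f x)) := by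
  intro x hx
  obtain ⟨C, hC⟩ := hbdd
  choose u hu_crit hu_le hu_dist using fun n : ℕ =>
    hlsc.exists_mem_epsCrit_dist_le hC hx (Nat.cast_add_one_pos n)
  have hu : Tendsto u atTop (𝓝 x) := by
    refine tendsto_iff_dist_tendsto_zero.2 <| squeeze_zero (fun _ => dist_nonneg) (fun n => ?_)
      (by simpa using tendsto_one_div_add_atTop_nhds_zero_nat.const_mul ((f x).toReal - C))
    rw [← div_eq_mul_inv, le_div_iff₀' (Nat.cast_add_one_pos n)]
    exact hu_dist n
  refine ⟨u, fun n => ⟨(hu_crit n).1, ?_⟩, hu, ?_⟩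
  · exact (globalSlope_le_of_mem_epsCrit (hu_crit n)).trans_lt ENNReal.ofReal_lt_top
  · exact (hlsc.lowerSemicontinuousAt x).tendsto_of_le hu (.of_forall hu_le)

/-- graphical density of `dom |∇̃f|` in `dom f`: for `f` proper, lsc and
bounded below on a complete metric space, every point of `dom f` is the limit of a sequence
of points of finite global slope along which the values of `f` converge as well. -/
theorem graphical_density {M : Type*} [MetricSpace M] [CompleteSpace M] (f : M → EReal)
    (hproper : ∃ x, f x ≠ ⊤) (hlsc : LowerSemicontinuous f)
    (hbdd : ∃ C : ℝ, ∀ x, (C : EReal) ≤ f x) :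
    ∀ x, f x ≠ ⊤ → ∃ u : ℕ → M,
      (∀ n, f (u n) ≠ ⊤ ∧ globalSlope f (u n) < ⊤) ∧
      Tendsto u atTop (𝓝 x) ∧ Tendsto (fun n => f (u n)) atTop (𝓝 (f x)) :=
  graphical_density_general f hlsc hbdd
end

section
/- Let (M,ρ) be a metric space and let τ be another topology on the set M. Assume f, g : M → ℝ are τ-continuous, that |∇f|(x) > |∇g|(x) for every x with |∇f|(x) ≠ 0, and that every sublevel set {x : f(x) ≤ c} is τ-compact. Then inf_M (f - g) = inf { f(x) - g(x) : x ∈ M, |∇f|(x) = 0 }. -/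
/-!
Let `h = f - g` and `x₀ ∈ M`. The sublevel set `{f ≤ f x₀}` is `τ`-compact and `h` is
`τ`-continuous, so `h` attains its minimum on it at some `u`, and `h u ≤ h x₀`. If `u` were not
critical for `f`, then `|∇g|(u) < t < |∇f|(u)` for some `t`, and a point `y` near `u` with
`f u - f y > t ρ(u,y) > g u - g y` would lie in the same sublevel set with `h y < h u`.
-/

open Filter Topology ENNReal

open NNReal

lemma erealPos_coe_sub (a b : ℝ) : erealPos ((a : EReal) - b) = ENNReal.ofReal (a - b) := by
  rw [← EReal.coe_sub, erealPos, if_neg (EReal.coe_ne_top _), EReal.toReal_coe]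

section Slope

variable {M : Type*} [MetricSpace M] {x : M} {t : ℝ≥0}

lemma lt_ofReal_div_edist_iff {y : M} (hxy : y ≠ x) {a : ℝ} :
    (t : ℝ≥0∞) < ENNReal.ofReal a / edist x y ↔ t * dist x y < a := by
  have hd : edist x y ≠ 0 := (edist_pos.2 hxy.symm).ne'
  rw [ENNReal.lt_div_iff_mul_lt (Or.inl hd) (Or.inl (edist_ne_top x y)), edist_dist,
    ← ofReal_coe_nnreal, ← ENNReal.ofReal_mul t.coe_nonneg, ENNReal.ofReal_lt_ofReal_iff']
  exact ⟨And.left, fun h => ⟨h, (by positivity : 0 ≤ (t : ℝ) * dist x y).trans_lt h⟩⟩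

lemma lt_mul_dist_of_ofReal_div_edist_lt {y : M} (hxy : y ≠ x) {a : ℝ}
    (h : ENNReal.ofReal a / edist x y < t) : a < t * dist x y := by
  have hd : edist x y ≠ 0 := (edist_pos.2 hxy.symm).ne'
  rw [ENNReal.div_lt_iff (Or.inl hd) (Or.inl (edist_ne_top x y)), edist_dist,
    ← ofReal_coe_nnreal, ← ENNReal.ofReal_mul t.coe_nonneg, ENNReal.ofReal_lt_ofReal_iff'] at h
  exact h.1

lemma frequently_mul_dist_lt_sub_of_lt_localSlope {f : M → ℝ}
    (h : (t : ℝ≥0∞) < localSlope (fun y => (f y : EReal)) x) :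
    ∃ᶠ y in 𝓝[≠] x, t * dist x y < f x - f y := by
  have hfreq : ∃ᶠ y in 𝓝[≠] x, (t : ℝ≥0∞) < erealPos ((f x : EReal) - f y) / edist x y :=
    frequently_lt_of_lt_limsup (by isBoundedDefault) h
  refine (hfreq.and_eventually self_mem_nhdsWithin).mono fun y ⟨hy, hyx⟩ => ?_
  rwa [erealPos_coe_sub, lt_ofReal_div_edist_iff hyx] at hy

lemma eventually_sub_lt_mul_dist_of_localSlope_lt {g : M → ℝ}
    (h : localSlope (fun y => (g y : EReal)) x < t) :
    ∀ᶠ y in 𝓝[≠] x, g x - g y < t * dist x y := by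
  have hev : ∀ᶠ y in 𝓝[≠] x, erealPos ((g x : EReal) - g y) / edist x y < t :=
    eventually_lt_of_limsup_lt h
  filter_upwards [hev, self_mem_nhdsWithin] with y hy hyx
  rw [erealPos_coe_sub] at hy
  exact lt_mul_dist_of_ofReal_div_edist_lt hyx hy

lemma exists_lt_and_sub_lt_of_localSlope_lt {f g : M → ℝ}
    (h : localSlope (fun y => (g y : EReal)) x < localSlope (fun y => (f y : EReal)) x) :
    ∃ y, f y < f x ∧ f y - g y < f x - g x := by
  obtain ⟨t, hgt, htf⟩ := exists_between h
  lift t to ℝ≥0 using htf.ne_top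
  obtain ⟨y, hf, hg⟩ := (frequently_mul_dist_lt_sub_of_lt_localSlope htf).and_eventually
    (eventually_sub_lt_mul_dist_of_localSlope_lt hgt) |>.exists
  have hnonneg : 0 ≤ (t : ℝ) * dist x y := by positivity
  exact ⟨y, by linarith, by linarith⟩

end Slope

lemma exists_localSlope_eq_zero_sub_le {M : Type*} [MetricSpace M]
    (τ : TopologicalSpace M) {f g : M → ℝ} (hf : Continuous[τ, _] f) (hg : Continuous[τ, _] g)
    (hslope : ∀ x, localSlope (fun y => (f y : EReal)) x ≠ 0 →
      localSlope (fun y => (g y : EReal)) x < localSlope (fun y => (f y : EReal)) x)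
    (hcompact : ∀ c : ℝ, @IsCompact M τ {x | f x ≤ c}) (x₀ : M) :
    ∃ u, localSlope (fun y => (f y : EReal)) u = 0 ∧ f u - g u ≤ f x₀ - g x₀ := by
  obtain ⟨u, hu, hmin⟩ := @IsCompact.exists_isMinOn ℝ M _ _ τ _ _ (hcompact (f x₀))
    ⟨x₀, le_refl (f x₀)⟩ (fun x => f x - g x) (hf.sub hg).continuousOn
  refine ⟨u, ?_, hmin (le_refl (f x₀))⟩
  by_contra hcrit
  obtain ⟨y, hfy, hhy⟩ := exists_lt_and_sub_lt_of_localSlope_lt (hslope u hcrit)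
  exact (hmin (hfy.le.trans hu : f y ≤ f x₀)).not_gt hhy

/-- Daniilidis–Salas: if `f, g : M → ℝ` are continuous for an auxiliary
topology `τ`, `|∇f| > |∇g|` outside the critical set `{|∇f| = 0}` (slopes taken in the
metric topology), and the sublevel sets of `f` are `τ`-compact, then
`inf (f - g) = inf_{0-crit f} (f - g)`. -/
theorem inf_sub_eq_inf_on_crit_of_compact_sublevels {M : Type*} [MetricSpace M]
    (τ : TopologicalSpace M) (f g : M → ℝ)
    (hf : Continuous[τ, _] f) (hg : Continuous[τ, _] g)
    (hslope : ∀ x, localSlope (fun y => (f y : EReal)) x ≠ 0 →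
      localSlope (fun y => (g y : EReal)) x < localSlope (fun y => (f y : EReal)) x)
    (hcompact : ∀ c : ℝ, @IsCompact M τ {x | f x ≤ c}) :
    ⨅ x : M, ((f x - g x : ℝ) : EReal) =
      ⨅ x ∈ {x | localSlope (fun y => (f y : EReal)) x = 0}, ((f x - g x : ℝ) : EReal) := by
  refine le_antisymm (le_iInf₂ fun x _ => iInf_le _ x) (le_iInf fun x₀ => ?_)
  obtain ⟨u, hu, hle⟩ := exists_localSlope_eq_zero_sub_le τ hf hg hslope hcompact x₀
  exact (iInf₂_le u hu).trans (EReal.coe_le_coe_iff.2 hle)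
end

section
/- Let (M,ρ) be a complete metric space, let f : M → ℝ ∪ {+∞} be proper, lower semicontinuous and bounded below, and let g : M → ℝ be continuous with |∇f|(x) > |∇g|(x) for every x ∈ dom f with |∇f|(x) ≠ 0. Then for any x₀ ∈ dom f at least one of the following holds: (a) there exists x̄ with |∇f|(x̄) = 0 and f(x₀) - g(x₀) ≥ f(x̄) - g(x̄); or (b) for every sequence εₙ strictly decreasing to 0 there exists a sequence (xₙ)_{n≥1} with |∇f|(xₙ) ≤ εₙ for each n, having no convergent subsequence, satisfying Σ_{n≥1} εₙ·ρ(xₙ, xₙ₋₁) < ∞ and f(xₙ) - g(xₙ) ≥ f(xₙ₊₁) - g(xₙ₊₁) for all n ≥ 0. -/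
/-!
Ekeland's variational principle, applied to `f` on the closed sublevel set `{f - g ≤ (f - g)(x)}`
(where `f` is real-valued), gives `x'` minimizing `y ↦ f y + δ ρ(y, x')` over the sublevel set of
`f - g` through `x'`. Any `y` near `x'` either lies in that sublevel set, so that
`f x' - f y ≤ δ ρ(y, x')`, or satisfies `f x' - f y < g x' - g y`; hence
`|∇f|(x') ≤ max(δ, |∇g|(x'))`, and the slope hypothesis forces `|∇f|(x') ≤ δ`.
Iterating with `δ = εₙ` produces the sequence; `f` drops by at least `εₙ ρ(xₙ, xₙ₋₁)` at each
step, which gives the summability. The limit of a convergent subsequence would, by lower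
semicontinuity, be such a minimizer with `δ = 0`, hence a critical point as in (a).
-/

open Filter Topology ENNReal

theorem erealPos_eq_toENNReal : erealPos = EReal.toENNReal := rfl

theorem EReal.sub_le_coe_sub_coe_of_sub_coe_le {a b : EReal} {r s : ℝ}
    (h : a - r ≤ b - s) : a - b ≤ r - s := by
  induction a using EReal.rec <;> induction b using EReal.rec <;>
    simp_all [← EReal.coe_sub]
  linarith

theorem EReal.ne_top_of_sub_coe_le {a b : EReal} {r s : ℝ} (h : a - r ≤ b - s) (hb : b ≠ ⊤) :
    a ≠ ⊤ := by
  rintro rfl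
  induction b using EReal.rec <;> simp_all [← EReal.coe_sub]

theorem LowerSemicontinuous.sub_coe {X : Type*} [TopologicalSpace X] {f : X → EReal} {g : X → ℝ}
    (hf : LowerSemicontinuous f) (hg : Continuous g) :
    LowerSemicontinuous fun x => f x - g x :=
  hf.add' (continuous_coe_real_ereal.comp hg.neg).lowerSemicontinuous fun _ =>
    EReal.continuousAt_add (.inr (EReal.coe_ne_bot _)) (.inr (EReal.coe_ne_top _))

theorem LowerSemicontinuous.ereal_toReal {X : Type*} [TopologicalSpace X] {f : X → EReal}
    (hf : LowerSemicontinuous f) (h_top : ∀ x, f x ≠ ⊤) (h_bot : ∀ x, f x ≠ ⊥) :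
    LowerSemicontinuous fun x => (f x).toReal := by
  intro x c hc
  have hcx : (c : EReal) < f x := by
    rw [← EReal.coe_toReal (h_top x) (h_bot x)]; exact_mod_cast hc
  filter_upwards [hf x c hcx] with y hy
  rw [← EReal.coe_toReal (h_top y) (h_bot y)] at hy
  exact_mod_cast hy

theorem LowerSemicontinuous.le_of_tendsto_of_tendsto {X β ι : Type*} [TopologicalSpace X]
    [CompleteLinearOrder β] [TopologicalSpace β] [OrderTopology β] {f : X → β}
    (hf : LowerSemicontinuous f) {l : Filter ι} [l.NeBot] {u : ι → X} {a : X}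
    (hu : Tendsto u l (𝓝 a)) {b : ι → β} {B : β} (hb : Tendsto b l (𝓝 B))
    (h : ∀ᶠ k in l, f (u k) ≤ b k) : f a ≤ B :=
  calc f a ≤ liminf f (𝓝 a) := hf.le_liminf a
    _ ≤ liminf (f ∘ u) l := hu.liminf_le_liminf_comp
    _ ≤ liminf b l := liminf_le_liminf h
    _ = B := hb.liminf_eq

theorem LowerSemicontinuous.le_of_tendsto_of_antitone {X β : Type*} [TopologicalSpace X]
    [CompleteLinearOrder β] [TopologicalSpace β] [OrderTopology β] {f : X → β}
    (hf : LowerSemicontinuous f) {u : ℕ → X} {a : X} (hu : Tendsto u atTop (𝓝 a))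
    (hfu : Antitone (f ∘ u)) (k : ℕ) : f a ≤ f (u k) :=
  hf.le_of_tendsto_of_tendsto hu tendsto_const_nhds
    ((eventually_ge_atTop k).mono fun _ hj => hfu hj)

theorem summable_of_add_le_of_forall_le {a u : ℕ → ℝ} {C : ℝ} (ha : ∀ n, 0 ≤ a n)
    (hau : ∀ n, u (n + 1) + a n ≤ u n) (hC : ∀ n, C ≤ u n) : Summable a := by
  refine summable_of_sum_range_le ha (c := u 0 - C) fun n => ?_
  calc ∑ i ∈ Finset.range n, a i ≤ ∑ i ∈ Finset.range n, (u i - u (i + 1)) :=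
        Finset.sum_le_sum fun i _ => by linarith [hau i]
    _ = u 0 - u n := Finset.sum_range_sub' u n
    _ ≤ u 0 - C := by linarith [hC n]

theorem EReal.summable_of_add_le_of_forall_le {a : ℕ → ℝ} {v : ℕ → EReal} (ha : ∀ n, 0 ≤ a n)
    (hav : ∀ n, v (n + 1) + a n ≤ v n) (hv_top : ∀ n, v n ≠ ⊤)
    (hv_bdd : ∃ C : ℝ, ∀ n, (C : EReal) ≤ v n) : Summable a := by
  obtain ⟨C, hC⟩ := hv_bdd
  have hv : ∀ n, v n = (v n).toReal := fun n =>
    (EReal.coe_toReal (hv_top n) (ne_bot_of_le_ne_bot (EReal.coe_ne_bot C) (hC n))).symm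
  refine _root_.summable_of_add_le_of_forall_le ha (u := fun n => (v n).toReal) (C := C)
    (fun n => ?_) (fun n => by
      simpa using EReal.toReal_le_toReal (hC n) (EReal.coe_ne_bot C) (hv_top n))
  have := hav n
  rw [hv n, hv (n + 1)] at this
  exact_mod_cast this

theorem exists_seq_of_forall_exists {α : Type*} {P : α → Prop} {R : ℕ → α → α → Prop}
    (h : ∀ n x, P x → ∃ y, P y ∧ R n x y) {x₀ : α} (h₀ : P x₀) :
    ∃ x : ℕ → α, x 0 = x₀ ∧ ∀ n, P (x n) ∧ R n (x n) (x (n + 1)) := by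
  choose next hnext using h
  let s : ℕ → {x // P x} := fun n =>
    Nat.rec ⟨x₀, h₀⟩ (fun n p => ⟨next n p p.2, (hnext n p p.2).1⟩) n
  refine ⟨fun n => (s n).1, rfl, fun n => ⟨(s n).2, ?_⟩⟩
  exact (hnext n _ (s n).2).2

theorem Set.Nonempty.exists_le_add_of_bddBelow {X : Type*} {s : Set X} {F : X → ℝ}
    (hs : s.Nonempty) (hF : BddBelow (F '' s)) {η : ℝ} (hη : 0 < η) :
    ∃ y ∈ s, ∀ z ∈ s, F y ≤ F z + η := by
  obtain ⟨_, ⟨y, hy, rfl⟩, hlt⟩ := Real.lt_sInf_add_pos (hs.image F) hη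
  exact ⟨y, hy, fun z hz => by linarith [csInf_le hF ⟨z, hz, rfl⟩]⟩

theorem ekeland_variational_principle {X : Type*} [PseudoMetricSpace X] [CompleteSpace X]
    {F : X → ℝ} (hF : LowerSemicontinuous F) (hF_bdd : BddBelow (Set.range F)) {ε : ℝ}
    (hε : 0 < ε) (x₀ : X) :
    ∃ x, F x + ε * dist x x₀ ≤ F x₀ ∧ ∀ y, F x ≤ F y + ε * dist y x := by
  set D : X → Set X := fun x => {y | F y + ε * dist y x ≤ F x}
  have hD_self : ∀ x, x ∈ D x := fun x => by simp [D]
  have hD_trans : ∀ {x y z}, y ∈ D x → z ∈ D y → z ∈ D x := fun {x y z} hy hz => by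
    simp only [D, Set.mem_ofPred_eq] at hy hz ⊢
    linarith [mul_le_mul_of_nonneg_left (dist_triangle z y x) hε.le]
  have hD_closed : ∀ x, IsClosed (D x) := fun x =>
    (hF.add ((continuous_id.dist continuous_const).const_mul ε).lowerSemicontinuous)
      |>.isClosed_preimage (F x)
  have step : ∀ (k : ℕ) x, ∃ y ∈ D x, ∀ z ∈ D x, F y ≤ F z + 1 / (k + 1) := fun k x =>
    Set.Nonempty.exists_le_add_of_bddBelow ⟨x, hD_self x⟩
      (hF_bdd.mono (Set.image_subset_range F (D x))) Nat.one_div_pos_of_nat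
  choose next hnext_mem hnext_min using step
  let u : ℕ → X := fun k => Nat.rec x₀ next k
  have hu_chain : ∀ k l, k ≤ l → u l ∈ D (u k) := fun k l hkl => by
    induction l, hkl using Nat.le_induction with
    | base => exact hD_self _
    | succ l _ ih => exact hD_trans ih (hnext_mem l (u l))
  have hu_cauchy : CauchySeq u := by
    obtain ⟨C, hC⟩ := hF_bdd
    refine cauchySeq_of_summable_dist ((summable_mul_left_iff hε.ne').1 ?_)
    refine summable_of_add_le_of_forall_le (u := fun n => F (u n)) (C := C)
      (fun n => by positivity) (fun n => ?_) (fun n => hC ⟨u n, rfl⟩)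
    rw [dist_comm]
    exact hnext_mem n (u n)
  obtain ⟨x, hx⟩ := cauchySeq_tendsto_of_complete hu_cauchy
  have hx_mem : ∀ k, x ∈ D (u k) := fun k =>
    (hD_closed _).mem_of_tendsto hx ((eventually_ge_atTop k).mono fun l => hu_chain k l)
  refine ⟨x, hx_mem 0, fun y => ?_⟩
  by_cases hy : y ∈ D x
  · have hxy : ∀ k : ℕ, F x ≤ F y + 1 / (k + 1) := fun k =>
      calc F x ≤ F x + ε * dist x (u (k + 1)) := le_add_of_nonneg_right (by positivity)
        _ ≤ F (u (k + 1)) := hx_mem (k + 1)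
        _ ≤ F y + 1 / (k + 1) := hnext_min k (u k) y (hD_trans (hx_mem k) hy)
    calc F x ≤ F y := by
          simpa using ge_of_tendsto'
            (tendsto_const_nhds.add tendsto_one_div_add_atTop_nhds_zero_nat) hxy
      _ ≤ F y + ε * dist y x := le_add_of_nonneg_right (by positivity)
  · simp only [D, Set.mem_ofPred_eq, not_le] at hy
    exact hy.le

section Sublevel

variable {M : Type*} [PseudoMetricSpace M] {f : M → EReal} {g : M → ℝ}

def IsPerturbedMinOnSublevel (f : M → EReal) (g : M → ℝ) (δ : ℝ) (x : M) : Prop :=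
  ∀ y, f y - g y ≤ f x - g x → f x ≤ f y + ↑(δ * dist y x)

theorem exists_isPerturbedMinOnSublevel [CompleteSpace M] (hf : LowerSemicontinuous f)
    (hf_bdd : ∃ C : ℝ, ∀ x, (C : EReal) ≤ f x) (hg : Continuous g) {x : M} (hx : f x ≠ ⊤)
    {δ : ℝ} (hδ : 0 < δ) :
    ∃ x', f x' ≠ ⊤ ∧ f x' + ↑(δ * dist x' x) ≤ f x ∧ f x' - g x' ≤ f x - g x ∧
      IsPerturbedMinOnSublevel f g δ x' := by
  obtain ⟨C, hC⟩ := hf_bdd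
  have h_bot : ∀ y, f y ≠ ⊥ := fun y => ne_bot_of_le_ne_bot (EReal.coe_ne_bot C) (hC y)
  set S := {y | f y - g y ≤ f x - g x}
  have hxS : x ∈ S := by simp [S]
  have : CompleteSpace S := ((hf.sub_coe hg).isClosed_preimage _).completeSpace_coe
  have h_top : ∀ y : S, f y ≠ ⊤ := fun y => EReal.ne_top_of_sub_coe_le y.2 hx
  have hf_eq : ∀ y : S, f y = ((f y).toReal : EReal) := fun y =>
    (EReal.coe_toReal (h_top y) (h_bot y)).symm
  have hF_bdd : BddBelow (Set.range fun y : S => (f y).toReal) := ⟨C, by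
    rintro _ ⟨y, rfl⟩
    simpa using EReal.toReal_le_toReal (hC y) (EReal.coe_ne_bot C) (h_top y)⟩
  obtain ⟨x', hx'x, hx'_min⟩ := ekeland_variational_principle
    ((hf.comp continuous_subtype_val).ereal_toReal h_top fun y => h_bot y) hF_bdd hδ ⟨x, hxS⟩
  refine ⟨x', h_top x', ?_, x'.2, fun y hy => ?_⟩
  · rw [hf_eq x', hf_eq ⟨x, hxS⟩]
    exact_mod_cast hx'x
  · have hyS : y ∈ S := hy.trans x'.2
    rw [hf_eq x', hf_eq ⟨y, hyS⟩]
    exact_mod_cast hx'_min ⟨y, hyS⟩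

theorem isPerturbedMinOnSublevel_zero_of_tendsto (hf : LowerSemicontinuous f) (hg : Continuous g)
    {u : ℕ → M} {l : M} (hu : Tendsto u atTop (𝓝 l))
    (hu_anti : Antitone fun k => f (u k) - g (u k)) {δ : ℕ → ℝ} (hδ : Tendsto δ atTop (𝓝 0))
    (hu_min : ∀ᶠ k in atTop, IsPerturbedMinOnSublevel f g (δ k) (u k)) :
    IsPerturbedMinOnSublevel f g 0 l := by
  intro y hy
  have hb : Tendsto (fun k => f y + ↑(δ k * dist y (u k))) atTop (𝓝 (f y + ↑(0 : ℝ))) := by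
    have : Tendsto (fun k => δ k * dist y (u k)) atTop (𝓝 0) := by
      simpa using hδ.mul (tendsto_const_nhds.dist hu)
    exact (EReal.continuousAt_add (.inr (EReal.coe_ne_bot 0)) (.inr (EReal.coe_ne_top 0)))
      |>.tendsto.comp (tendsto_const_nhds.prodMk_nhds (EReal.tendsto_coe.2 this))
  have hl := hf.le_of_tendsto_of_tendsto hu hb <| hu_min.mono fun k hk =>
    hk y (hy.trans ((hf.sub_coe hg).le_of_tendsto_of_antitone hu hu_anti k))
  simpa using hl

end Sublevel

section Slope

variable {M : Type*} [MetricSpace M] {f : M → EReal} {g : M → ℝ} {x : M} {δ : ℝ}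

theorem localSlope_le_max_of_isPerturbedMinOnSublevel (hδ : 0 ≤ δ)
    (h : IsPerturbedMinOnSublevel f g δ x) :
    localSlope f x ≤ max (ENNReal.ofReal δ) (localSlope (fun y => (g y : EReal)) x) := by
  simp only [localSlope, erealPos_eq_toENNReal]
  calc _ ≤ limsup (fun y => max (ENNReal.ofReal δ) ((g x - g y : EReal).toENNReal / edist x y))
        (𝓝[≠] x) := limsup_le_limsup (.of_forall fun y => ?_)
    _ = max (limsup (fun _ => ENNReal.ofReal δ) (𝓝[≠] x)) _ := limsup_max
    _ ≤ _ := max_le_max_right _ <|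
        limsup_le_of_le (by isBoundedDefault) (.of_forall fun _ => le_rfl)
  rcases le_or_gt (f y - g y) (f x - g x) with hyx | hyx
  · refine le_max_of_le_left (ENNReal.div_le_of_le_mul ?_)
    calc (f x - f y).toENNReal ≤ ((δ * dist y x : ℝ) : EReal).toENNReal :=
          EReal.toENNReal_le_toENNReal (EReal.sub_le_of_le_add' (h y hyx))
      _ = ENNReal.ofReal δ * edist x y := by
          rw [EReal.real_coe_toENNReal, ENNReal.ofReal_mul hδ, edist_dist, dist_comm]
  · exact le_max_of_le_right (ENNReal.div_le_div_right
      (EReal.toENNReal_le_toENNReal (EReal.sub_le_coe_sub_coe_of_sub_coe_le hyx.le)) _)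

theorem localSlope_le_of_isPerturbedMinOnSublevel
    (hslope : localSlope f x ≠ 0 → localSlope (fun y => (g y : EReal)) x < localSlope f x)
    (hδ : 0 ≤ δ) (h : IsPerturbedMinOnSublevel f g δ x) : localSlope f x ≤ ENNReal.ofReal δ := by
  rcases eq_or_ne (localSlope f x) 0 with h0 | h0
  · exact h0 ▸ zero_le
  · exact (le_max_iff.1 (localSlope_le_max_of_isPerturbedMinOnSublevel hδ h)).resolve_right
      (hslope h0).not_ge

end Slope

theorem crit_or_escaping_sequence_general {M : Type*} [MetricSpace M] [CompleteSpace M]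
    (f : M → EReal) (g : M → ℝ)
    (hlsc : LowerSemicontinuous f)
    (hbdd : ∃ C : ℝ, ∀ x, (C : EReal) ≤ f x) (hg : Continuous g)
    (hslope : ∀ x, f x ≠ ⊤ → localSlope f x ≠ 0 →
      localSlope (fun y => (g y : EReal)) x < localSlope f x)
    (x₀ : M) (hx₀ : f x₀ ≠ ⊤) :
    (∃ xb, f xb ≠ ⊤ ∧ localSlope f xb = 0 ∧ f xb - ↑(g xb) ≤ f x₀ - ↑(g x₀)) ∨
    (∀ ε : ℕ → ℝ, StrictAnti ε → (∀ n, 0 < ε n) → Tendsto ε atTop (𝓝 0) →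
      ∃ x : ℕ → M, x 0 = x₀ ∧
        (∀ n : ℕ, 1 ≤ n → f (x n) ≠ ⊤ ∧ localSlope f (x n) ≤ ENNReal.ofReal (ε n)) ∧
        (¬ ∃ (φ : ℕ → ℕ) (l : M), StrictMono φ ∧ Tendsto (x ∘ φ) atTop (𝓝 l)) ∧
        Summable (fun n : ℕ => ε (n + 1) * dist (x (n + 1)) (x n)) ∧
        (∀ n : ℕ, f (x (n + 1)) - ↑(g (x (n + 1))) ≤ f (x n) - ↑(g (x n)))) := by
  refine or_iff_not_imp_left.2 fun hcrit ε _ hε_pos hε_lim => ?_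
  obtain ⟨x, rfl, hx⟩ := exists_seq_of_forall_exists
    (fun n y hy => exists_isPerturbedMinOnSublevel hlsc hbdd hg hy (hε_pos (n + 1))) hx₀
  have hx_anti : Antitone fun n => f (x n) - g (x n) :=
    antitone_nat_of_succ_le fun n => (hx n).2.2.1
  have hx_min : ∀ n, 1 ≤ n → IsPerturbedMinOnSublevel f g (ε n) (x n) := fun n hn => by
    obtain ⟨n, rfl⟩ := Nat.exists_eq_add_of_le' hn
    exact (hx n).2.2.2
  refine ⟨x, rfl, fun n hn => ⟨(hx n).1, localSlope_le_of_isPerturbedMinOnSublevel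
    (hslope _ (hx n).1) (hε_pos n).le (hx_min n hn)⟩, ?_, ?_, fun n => (hx n).2.2.1⟩
  · rintro ⟨φ, l, hφ, hl⟩
    have hφ_anti := hx_anti.comp_monotone hφ.monotone
    have hl_le : f l - g l ≤ f (x 0) - g (x 0) :=
      ((hlsc.sub_coe hg).le_of_tendsto_of_antitone hl hφ_anti 0).trans (hx_anti (Nat.zero_le _))
    have hl_top : f l ≠ ⊤ := EReal.ne_top_of_sub_coe_le hl_le (hx 0).1
    have hl_min : IsPerturbedMinOnSublevel f g 0 l :=
      isPerturbedMinOnSublevel_zero_of_tendsto hlsc hg hl hφ_anti (hε_lim.comp hφ.tendsto_atTop)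
        ((hφ.tendsto_atTop.eventually_ge_atTop 1).mono fun k => hx_min (φ k))
    refine hcrit ⟨l, hl_top, le_zero_iff.1 ?_, hl_le⟩
    simpa using localSlope_le_of_isPerturbedMinOnSublevel (hslope l hl_top) le_rfl hl_min
  · exact EReal.summable_of_add_le_of_forall_le (v := fun n => f (x n))
      (fun n => mul_nonneg (hε_pos _).le dist_nonneg) (fun n => (hx n).2.1) (fun n => (hx n).1)
      (hbdd.imp fun _ hC n => hC (x n))

/-- for `f` proper lsc bounded below on a complete metric space and `g : M → ℝ`
continuous with `|∇f| > |∇g|` wherever `|∇f| ≠ 0` on `dom f`, for every `x₀ ∈ dom f` either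
(a) there is a critical point `x̄` of `f` with `f(x₀) - g(x₀) ≥ f(x̄) - g(x̄)`, or
(b) for every sequence `εₙ ↘ 0` there is a sequence `xₙ` (starting at `x₀`) with
`xₙ ∈ εₙ-crit f` for `n ≥ 1`, no convergent subsequence, `Σ εₙ ρ(xₙ,xₙ₋₁) < ∞`, and
`f(xₙ) - g(xₙ)` nonincreasing. -/
theorem crit_or_escaping_sequence {M : Type*} [MetricSpace M] [CompleteSpace M]
    (f : M → EReal) (g : M → ℝ)
    (hproper : ∃ x, f x ≠ ⊤) (hlsc : LowerSemicontinuous f)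
    (hbdd : ∃ C : ℝ, ∀ x, (C : EReal) ≤ f x) (hg : Continuous g)
    (hslope : ∀ x, f x ≠ ⊤ → localSlope f x ≠ 0 →
      localSlope (fun y => (g y : EReal)) x < localSlope f x)
    (x₀ : M) (hx₀ : f x₀ ≠ ⊤) :
    (∃ xb, f xb ≠ ⊤ ∧ localSlope f xb = 0 ∧ f xb - ↑(g xb) ≤ f x₀ - ↑(g x₀)) ∨
    (∀ ε : ℕ → ℝ, StrictAnti ε → (∀ n, 0 < ε n) → Tendsto ε atTop (𝓝 0) →
      ∃ x : ℕ → M, x 0 = x₀ ∧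
        (∀ n : ℕ, 1 ≤ n → f (x n) ≠ ⊤ ∧ localSlope f (x n) ≤ ENNReal.ofReal (ε n)) ∧
        (¬ ∃ (φ : ℕ → ℕ) (l : M), StrictMono φ ∧ Tendsto (x ∘ φ) atTop (𝓝 l)) ∧
        Summable (fun n : ℕ => ε (n + 1) * dist (x (n + 1)) (x n)) ∧
        (∀ n : ℕ, f (x (n + 1)) - ↑(g (x (n + 1))) ≤ f (x n) - ↑(g (x n)))) :=
  crit_or_escaping_sequence_general f g hlsc hbdd hg hslope x₀ hx₀
end

section
/- Let (M,ρ) be a complete metric space, let f : M → ℝ ∪ {+∞} be proper, lower semicontinuous and bounded below, and let g : M → ℝ be continuous. Assume |∇̃f|(x) > |∇̃g|(x) for every x ∈ dom f with |∇̃f|(x) ≠ 0. Then for each ε > 0 and each x₀ ∈ M there exists x ∈ ε-Crit f such that f(x) ≤ f(x₀) - ε·ρ(x, x₀) and f(x₀) - g(x₀) ≥ f(x) - g(x). In particular f - g ≥ inf { f(y) - g(y) : y ∈ ε-Crit f } everywhere. -/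
open Filter Topology ENNReal

/-! Ekeland's variational principle for the order `y ≼ x ↔ f y + ε ρ(y, x) ≤ f x ∧
(f - g) y ≤ (f - g) x` gives a `≼`-minimal point `x ≼ x₀`: the sets `{y | y ≼ x}` are closed and
nested, and they shrink to a point along a sequence that almost minimises `f` at each step.
If `x` were not `ε`-critical, then `|∇̃f|(x) > ε`, hence also `|∇̃f|(x) > |∇̃g|(x)`, so some
`y ≠ x` has an `f`-difference quotient exceeding both `ε` and the `g`-difference quotient;
such a `y` satisfies `y ≼ x`, contradicting minimality. -/

section

open Metric Set

theorem exists_coe_eq_of_coe_le {C : ℝ} {a : EReal} (hC : (C : EReal) ≤ a) (ha : a ≠ ⊤) :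
    ∃ c : ℝ, (c : EReal) = a :=
  ⟨a.toReal, EReal.coe_toReal ha ((EReal.bot_lt_coe C).trans_le hC).ne'⟩

theorem ne_top_of_add_coe_le {a b : EReal} {r : ℝ} (h : a + r ≤ b) (hb : b ≠ ⊤) : a ≠ ⊤ := by
  rintro rfl
  exact hb (top_le_iff.1 (by simpa using h))

universe u

variable {X : Type u} [MetricSpace X]

theorem exists_mem_eq_singleton_of_shrinking [CompleteSpace X] (S : X → Set X)
    (hclosed : ∀ x, IsClosed (S x)) (hself : ∀ x, x ∈ S x)
    (htrans : ∀ x, ∀ y ∈ S x, S y ⊆ S x) (x₀ : X)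
    (hshrink : ∀ x ∈ S x₀, ∀ δ > 0, ∃ y ∈ S x, S y ⊆ closedBall y δ) :
    ∃ x ∈ S x₀, S x = {x} := by
  choose! next hnext_mem hnext_ball using hshrink
  let u : ℕ → X := fun n => Nat.rec x₀ (fun k xk => next xk (1 / (k + 1))) n
  have hu_mem : ∀ n, u n ∈ S x₀ := by
    intro n
    induction n with
    | zero => exact hself x₀
    | succ n ih => exact htrans x₀ (u n) ih (hnext_mem (u n) ih _ (by positivity))
  have hu_succ : ∀ n, u (n + 1) ∈ S (u n) := fun n =>
    hnext_mem (u n) (hu_mem n) _ (by positivity)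
  have hu_ball : ∀ n, S (u (n + 1)) ⊆ closedBall (u (n + 1)) (1 / (n + 1)) := fun n =>
    hnext_ball (u n) (hu_mem n) _ (by positivity)
  have hanti : Antitone fun n => S (u n) :=
    antitone_nat_of_succ_le fun n => htrans _ _ (hu_succ n)
  have hdiam : Tendsto (fun n => diam (S (u (n + 1)))) atTop (𝓝 0) := by
    refine squeeze_zero (fun _ => diam_nonneg) (fun n => ?_)
      (mul_zero (2 : ℝ) ▸ tendsto_one_div_add_atTop_nhds_zero_nat.const_mul 2)
    calc diam (S (u (n + 1))) ≤ diam (closedBall (u (n + 1)) (1 / (n + 1))) :=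
          diam_mono (hu_ball n) isBounded_closedBall
      _ ≤ 2 * (1 / ((n : ℝ) + 1)) := diam_closedBall (by positivity)
  obtain ⟨x, hx⟩ : (⋂ n, S (u (n + 1))).Nonempty := by
    refine nonempty_iInter_of_nonempty_biInter (fun n => hclosed _)
      (fun n => isBounded_closedBall.subset (hu_ball n)) (fun N => ⟨u (N + 1), ?_⟩) hdiam
    exact mem_iInter₂.2 fun n hn => hanti (Nat.succ_le_succ hn) (hself _)
  rw [mem_iInter] at hx
  refine ⟨x, htrans x₀ _ (hu_mem 1) (hx 0),
    subset_antisymm (fun z hz => ?_) (singleton_subset_iff.2 (hself x))⟩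
  refine eq_of_forall_dist_le fun δ hδ => ?_
  obtain ⟨n, hn⟩ := exists_nat_one_div_lt (half_pos hδ)
  have hzn : z ∈ S (u (n + 1)) := htrans _ x (hx n) hz
  calc dist z x ≤ dist z (u (n + 1)) + dist x (u (n + 1)) := dist_triangle_right _ _ _
    _ ≤ 1 / (n + 1) + 1 / (n + 1) := add_le_add (hu_ball n hzn) (hu_ball n (hx n))
    _ ≤ δ := by linarith

theorem exists_mem_eq_singleton_of_add_dist_le [CompleteSpace X] {f : X → EReal} {C : ℝ}
    (hC : ∀ x, (C : EReal) ≤ f x) {ε : ℝ} (hε : 0 < ε) (S : X → Set X)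
    (hclosed : ∀ x, IsClosed (S x)) (hself : ∀ x, x ∈ S x)
    (htrans : ∀ x, ∀ y ∈ S x, S y ⊆ S x) (hS : ∀ x, ∀ y ∈ S x, f y + ↑(ε * dist y x) ≤ f x)
    {x₀ : X} (hx₀ : f x₀ ≠ ⊤) : ∃ x ∈ S x₀, S x = {x} := by
  refine exists_mem_eq_singleton_of_shrinking S hclosed hself htrans x₀ fun x hx δ hδ => ?_
  -- `y` almost minimises `f` on `S x`, so any `z ∈ S y` has `ε * dist z y ≤ f y - f z < ε * δ`.
  obtain ⟨μ, hμ⟩ := exists_coe_eq_of_coe_le (le_iInf₂ fun z _ => hC z)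
    ((iInf₂_le x (hself x)).trans_lt ((ne_top_of_add_coe_le (hS x₀ x hx) hx₀).lt_top)).ne
  obtain ⟨y, hy, hfy⟩ : ∃ y ∈ S x, f y < ↑(μ + ε * δ) := by
    have : ⨅ z ∈ S x, f z < ↑(μ + ε * δ) := by
      rw [← hμ, EReal.coe_lt_coe_iff]
      exact lt_add_of_pos_right μ (mul_pos hε hδ)
    simpa only [iInf_lt_iff, exists_prop] using this
  refine ⟨y, hy, fun z hz => ?_⟩
  have hμz : (μ : EReal) ≤ f z := hμ.symm ▸ iInf₂_le z (htrans x y hy hz)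
  obtain ⟨c, hc⟩ := exists_coe_eq_of_coe_le (hC z)
    (ne_top_of_add_coe_le (hS y z hz) (hfy.trans (EReal.coe_lt_top _)).ne)
  have hzy := (hS y z hz).trans_lt hfy
  rw [← hc] at hzy hμz
  norm_cast at hzy hμz
  rw [mem_closedBall]
  nlinarith

def descentSet (f : X → EReal) (g : X → ℝ) (ε : ℝ) (x : X) : Set X :=
  {y | f y + ↑(ε * dist y x) ≤ f x ∧ f y - ↑(g y) ≤ f x - ↑(g x)}

theorem self_mem_descentSet (f : X → EReal) (g : X → ℝ) (ε : ℝ) (x : X) :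
    x ∈ descentSet f g ε x := by
  simp [descentSet]

theorem descentSet_subset {f : X → EReal} {g : X → ℝ} {ε : ℝ} (hε : 0 ≤ ε) {x y : X}
    (hy : y ∈ descentSet f g ε x) : descentSet f g ε y ⊆ descentSet f g ε x := by
  intro z hz
  refine ⟨?_, hz.2.trans hy.2⟩
  have htri : (↑(ε * dist z x) : EReal) ≤ ↑(ε * dist z y) + ↑(ε * dist y x) := by
    norm_cast
    nlinarith [dist_triangle z y x]
  calc f z + ↑(ε * dist z x) ≤ f z + ↑(ε * dist z y) + ↑(ε * dist y x) := by
        rw [add_assoc]; gcongr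
    _ ≤ f y + ↑(ε * dist y x) := by gcongr; exact hz.1
    _ ≤ f x := hy.1

theorem isClosed_setOf_add_coe_le {f : X → EReal} (hf : LowerSemicontinuous f) {h : X → ℝ}
    (hh : Continuous h) (c : EReal) : IsClosed {y | f y + ↑(h y) ≤ c} := by
  refine (hf.add' (continuous_coe_real_ereal.comp hh).lowerSemicontinuous fun _ => ?_
    ).isClosed_preimage c
  exact EReal.continuousAt_add (.inr (EReal.coe_ne_bot _)) (.inr (EReal.coe_ne_top _))

theorem isClosed_descentSet {f : X → EReal} (hf : LowerSemicontinuous f) {g : X → ℝ}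
    (hg : Continuous g) (ε : ℝ) (x : X) : IsClosed (descentSet f g ε x) := by
  have hgap : IsClosed {y | f y - ↑(g y) ≤ f x - ↑(g x)} := by
    convert isClosed_setOf_add_coe_le hf hg.neg (f x - ↑(g x)) using 4 with y
    rw [Pi.neg_apply, EReal.coe_neg, sub_eq_add_neg]
  exact (isClosed_setOf_add_coe_le hf (by fun_prop) (f x)).inter hgap

theorem erealPos_coe_sub_div_edist (a b : ℝ) {x y : X} (hxy : x ≠ y) :
    erealPos ((a : EReal) - b) / edist x y = ENNReal.ofReal ((a - b) / dist x y) := by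
  rw [← EReal.coe_sub, erealPos, if_neg (EReal.coe_ne_top _), EReal.toReal_coe, edist_dist,
    ENNReal.ofReal_div_of_pos (dist_pos.2 hxy)]

theorem le_globalSlope {f : X → EReal} {x y : X} (hxy : y ≠ x) :
    erealPos (f x - f y) / edist x y ≤ globalSlope f x :=
  le_iSup₂ (f := fun y (_ : y ∈ {y | y ≠ x}) => erealPos (f x - f y) / edist x y) y hxy

theorem lt_globalSlope_iff {f : X → EReal} {x : X} {c : ℝ≥0∞} :
    c < globalSlope f x ↔ ∃ y ≠ x, c < erealPos (f x - f y) / edist x y := by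
  simp [globalSlope, lt_iSup_iff]

theorem mem_epsCrit_of_globalSlope_le {f : X → EReal} (hbot : ∀ y, f y ≠ ⊥) {ε : ℝ}
    (hε : 0 ≤ ε) {x : X} (hx : f x ≠ ⊤) (hslope : globalSlope f x ≤ ENNReal.ofReal ε) :
    x ∈ epsCrit ε f := by
  refine ⟨hx, fun y => ?_⟩
  obtain rfl | hyx := eq_or_ne y x
  · simp
  obtain hy | hy := eq_or_ne (f y) ⊤
  · simp [hy]
  have hterm := (le_globalSlope hyx).trans hslope
  lift f x to ℝ using ⟨hx, hbot x⟩ with a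
  lift f y to ℝ using ⟨hy, hbot y⟩ with b
  rw [erealPos_coe_sub_div_edist a b hyx.symm,
    ENNReal.ofReal_le_ofReal_iff hε, div_le_iff₀ (dist_pos.2 hyx.symm)] at hterm
  rw [← EReal.coe_sub, EReal.coe_le_coe_iff, dist_comm]
  linarith

theorem exists_ne_mem_descentSet {f : X → EReal} (hbot : ∀ y, f y ≠ ⊥) (g : X → ℝ) {ε : ℝ}
    (hε : 0 ≤ ε) {x : X} (hx : f x ≠ ⊤) (hεf : ENNReal.ofReal ε < globalSlope f x)
    (hgf : globalSlope (fun y => (g y : EReal)) x < globalSlope f x) :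
    ∃ y ≠ x, y ∈ descentSet f g ε x := by
  obtain ⟨y, hyx, hy⟩ := lt_globalSlope_iff.1 (max_lt hεf hgf)
  have hyt : f y ≠ ⊤ := by
    rintro hyt
    rw [hyt, EReal.sub_top, erealPos, if_neg bot_ne_top] at hy
    simp at hy
  have hg := (le_globalSlope (f := fun y => (g y : EReal)) hyx).trans_lt
    ((le_max_right _ _).trans_lt hy)
  have hε' := (le_max_left _ _).trans_lt hy
  refine ⟨y, hyx, show f y + ↑(ε * dist y x) ≤ f x ∧ f y - ↑(g y) ≤ f x - ↑(g x) from ?_⟩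
  lift f x to ℝ using ⟨hx, hbot x⟩ with a
  lift f y to ℝ using ⟨hyt, hbot y⟩ with b
  have hd := dist_pos.2 hyx.symm
  rw [erealPos_coe_sub_div_edist a b hyx.symm] at hg hε'
  rw [erealPos_coe_sub_div_edist (g x) (g y) hyx.symm] at hg
  rw [ENNReal.ofReal_lt_ofReal_iff_of_nonneg hε, lt_div_iff₀ hd] at hε'
  rw [ENNReal.ofReal_lt_ofReal_iff', div_lt_div_iff_of_pos_right hd] at hg
  simp only [← EReal.coe_sub, ← EReal.coe_add, EReal.coe_le_coe_iff]
  rw [dist_comm]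
  constructor <;> linarith [hg.1]

theorem exists_mem_epsCrit_mem_descentSet [CompleteSpace X] {f : X → EReal} {g : X → ℝ}
    (hlsc : LowerSemicontinuous f) {C : ℝ} (hC : ∀ x, (C : EReal) ≤ f x) (hg : Continuous g)
    (hslope : ∀ x, f x ≠ ⊤ → globalSlope f x ≠ 0 →
      globalSlope (fun y => (g y : EReal)) x < globalSlope f x)
    {ε : ℝ} (hε : 0 < ε) {x₀ : X} (hx₀ : f x₀ ≠ ⊤) :
    ∃ x ∈ epsCrit ε f, x ∈ descentSet f g ε x₀ := by
  have hbot : ∀ x, f x ≠ ⊥ := fun x => ((EReal.bot_lt_coe C).trans_le (hC x)).ne'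
  obtain ⟨x, hx, hmin⟩ := exists_mem_eq_singleton_of_add_dist_le hC hε (descentSet f g ε)
    (isClosed_descentSet hlsc hg ε) (self_mem_descentSet f g ε)
    (fun _ _ => descentSet_subset hε.le) (fun _ _ hy => hy.1) hx₀
  have hxt : f x ≠ ⊤ := ne_top_of_add_coe_le hx.1 hx₀
  refine ⟨x, ?_, hx⟩
  by_contra hnot
  have hεf : ENNReal.ofReal ε < globalSlope f x :=
    not_le.1 (mt (mem_epsCrit_of_globalSlope_le hbot hε.le hxt) hnot)
  obtain ⟨y, hyx, hy⟩ := exists_ne_mem_descentSet hbot g hε.le hxt hεf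
    (hslope x hxt (ne_bot_of_gt hεf))
  exact hyx (mem_singleton_iff.1 (hmin ▸ hy))

end

/-- global-slope version of Statement 12: for `f` proper lsc bounded below on
a complete metric space and `g : M → ℝ` continuous with `|∇̃f| > |∇̃g|` wherever `|∇̃f| ≠ 0`
on `dom f`, for each `ε > 0` and `x₀` there is `x ∈ ε-Crit f` with
`f(x) ≤ f(x₀) - ε·ρ(x,x₀)` and `f(x₀) - g(x₀) ≥ f(x) - g(x)`; in particular
`f - g ≥ inf_{ε-Crit f} (f - g)` everywhere. -/
theorem exists_epsCrit_global_slope {M : Type*} [MetricSpace M] [CompleteSpace M]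
    (f : M → EReal) (g : M → ℝ)
    (hproper : ∃ x, f x ≠ ⊤) (hlsc : LowerSemicontinuous f)
    (hbdd : ∃ C : ℝ, ∀ x, (C : EReal) ≤ f x) (hg : Continuous g)
    (hslope : ∀ x, f x ≠ ⊤ → globalSlope f x ≠ 0 →
      globalSlope (fun y => (g y : EReal)) x < globalSlope f x) :
    ∀ ε : ℝ, 0 < ε → ∀ x₀ : M,
      (∃ x ∈ epsCrit ε f,
        f x ≤ f x₀ - ↑(ε * dist x x₀) ∧ f x - ↑(g x) ≤ f x₀ - ↑(g x₀)) ∧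
      (⨅ y ∈ epsCrit ε f, (f y - ↑(g y))) ≤ f x₀ - ↑(g x₀) := by
  obtain ⟨C, hC⟩ := hbdd
  intro ε hε x₀
  by_cases hx₀ : f x₀ = ⊤
  · obtain ⟨w, hw⟩ := hproper
    obtain ⟨x, hx, -⟩ := exists_mem_epsCrit_mem_descentSet hlsc hC hg hslope hε hw
    simp only [hx₀, EReal.top_sub_coe, le_top, and_self, and_true]
    exact ⟨x, hx⟩
  · obtain ⟨x, hx, hle, hgap⟩ := exists_mem_epsCrit_mem_descentSet hlsc hC hg hslope hε hx₀
    refine ⟨⟨x, hx, ?_, hgap⟩, (iInf₂_le x hx).trans hgap⟩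
    exact (EReal.le_sub_iff_add_le (.inl (EReal.coe_ne_bot _)) (.inl (EReal.coe_ne_top _))).2
      hle
end
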